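/- With d the derived pseudometric from a context Γ as above, a function α: X → M into an extended metric space M satisfies all atoms of Γ (i.e. d_M(α(x),α(y)) ≤ ε for each atom x =_ε y in Γ) if and only if α is nonexpansive from (X,d) to M, provided the proof system is closed under the rule Cont (x =_δ y for all δ > ε implies x =_ε y). -/
import Mathlib


open scoped ENNReal NNReal

/-- Provability of quantitative equalities `x =_ε y` from a context `Γ`:
closure under reflexivity, symmetry, triangle, weakening and the rule Cont. -/
inductive CtxProves {X : Type*} (Γ : Set (X × X × ℝ≥0)) : X → X → ℝ≥0 → Prop
  | assum {x y ε} : (x, y, ε) ∈ Γ → CtxProves Γ x y ε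
  | refl (x) : CtxProves Γ x x 0
  | symm {x y ε} : CtxProves Γ x y ε → CtxProves Γ y x ε
  | triangle {x y z ε δ} : CtxProves Γ x y ε → CtxProves Γ y z δ →
      CtxProves Γ x z (ε + δ)
  | weaken {x y ε δ} : CtxProves Γ x y ε → ε ≤ δ → CtxProves Γ x y δ
  | cont {x y ε} : (∀ δ : ℝ≥0, ε < δ → CtxProves Γ x y δ) → CtxProves Γ x y ε

/-- A variable assignment `α : X → M` satisfies all atoms of a context `Γ`
iff it is nonexpansive from `(X, dΓ)` to `M`, where `dΓ` is the derived
pseudometric of `Γ` (whose defining infimum is attained thanks to Cont). -/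
theorem stmt_17 {X M : Type*} [EMetricSpace M] (Γ : Set (X × X × ℝ≥0)) (α : X → M) :
    let d : X → X → ℝ≥0∞ := fun x y => sInf {e : ℝ≥0∞ | ∃ ε : ℝ≥0, CtxProves Γ x y ε ∧ e = ε}
    ((∀ x y (ε : ℝ≥0), (x, y, ε) ∈ Γ → edist (α x) (α y) ≤ ε) ↔
      (∀ x y, edist (α x) (α y) ≤ d x y)) := by
  intro d
  constructor
  · intro h x y
    refine le_sInf ?_
    rintro e ⟨ε, hp, rfl⟩
    induction hp with
    | assum hmem => exact h _ _ _ hmem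
    | refl x => simp
    | symm _ ih => rwa [edist_comm]
    | triangle _ _ ih1 ih2 =>
        calc edist (α _) (α _) ≤ edist (α _) (α _) + edist (α _) (α _) :=
              edist_triangle _ _ _
          _ ≤ _ := by push_cast; exact add_le_add ih1 ih2
    | weaken _ hle ih => exact ih.trans (by exact_mod_cast hle)
    | cont _ ih =>
        by_contra hlt
        push_neg at hlt
        rcases ENNReal.lt_iff_exists_nnreal_btwn.mp hlt with ⟨δ, h1, h2⟩
        exact absurd (ih δ (by exact_mod_cast h1) |>.trans_lt h2) (lt_irrefl _)
  · intro h x y ε hmem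
    exact (h x y).trans (sInf_le ⟨ε, CtxProves.assum hmem, rfl⟩)
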